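/- arXiv:2605.13453 — 2 statements merged into one kernel-verified Lean document; each statement's English description precedes it below -/
import Mathlib

section
/- Let P be a symmetric positive definite n×n real matrix and ε > 0. Suppose A is an n×n real matrix satisfying P·A + Aᵀ·P ⪯ -ε·I (i.e., ε·I + P·A + Aᵀ·P is negative semidefinite). Then for every nonzero vector v, the function V(v) = vᵀ P v satisfies the decay estimate along the linear flow: for all t ≥ 0, (exp(tA)v)ᵀ P (exp(tA)v) ≤ exp(-(ε/λmax(P))·t) · vᵀ P v, where λmax(P) is the largest eigenvalue of P. -/
/-!
Along `x(t) = exp(tA) v` the Lyapunov function `V = xᵀ P x` has derivative `xᵀ (P A + Aᵀ P) x`,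
which is at most `-ε |x|²` by hypothesis. Since `P ⪯ λmax(P) I`, we have `|x|² ≥ V / λmax(P)`,
so `V' ≤ -(ε / λmax(P)) V` and Grönwall's inequality gives the exponential decay.
-/

open Matrix

section Derivatives

variable {𝕜 n : Type*} [NontriviallyNormedField 𝕜] [Fintype n] {u w : 𝕜 → n → 𝕜}
  {u' w' : n → 𝕜} {t : 𝕜}

theorem HasDerivAt.dotProduct (hu : HasDerivAt u u' t) (hw : HasDerivAt w w' t) :
    HasDerivAt (fun s => u s ⬝ᵥ w s) (u' ⬝ᵥ w t + u t ⬝ᵥ w') t := by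
  change HasDerivAt (fun s => ∑ i, u s i * w s i) (∑ i, u' i * w t i + ∑ i, u t i * w' i) t
  rw [← Finset.sum_add_distrib]
  exact HasDerivAt.fun_sum fun i _ => (hasDerivAt_pi.mp hu i).mul (hasDerivAt_pi.mp hw i)

theorem HasDerivAt.mulVec (M : Matrix n n 𝕜) (hu : HasDerivAt u u' t) :
    HasDerivAt (fun s => M *ᵥ u s) (M *ᵥ u') t :=
  hasDerivAt_pi.mpr fun i =>
    HasDerivAt.fun_sum fun j _ => (hasDerivAt_pi.mp hu j).const_mul (M i j)

end Derivatives

section MatrixExp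

variable {𝕜 n : Type*} [RCLike 𝕜] [Fintype n] [DecidableEq n]

attribute [local instance] Matrix.linftyOpNormedRing Matrix.linftyOpNormedAlgebra

theorem hasDerivAt_exp_smul_mulVec (A : Matrix n n 𝕜) (v : n → 𝕜) (t : 𝕜) :
    HasDerivAt (fun s => NormedSpace.exp (s • A) *ᵥ v)
      (A *ᵥ (NormedSpace.exp (t • A) *ᵥ v)) t := by
  rw [mulVec_mulVec]
  exact (LinearMap.applyₗ v ∘ₗ (toLin' : Matrix n n 𝕜 ≃ₗ[𝕜] _).toLinearMap).toContinuousLinearMap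
    |>.hasFDerivAt.comp_hasDerivAt t (hasDerivAt_exp_smul_const' A t)

end MatrixExp

theorem Matrix.dotProduct_mulVec_mul_add_transpose_mul {R n : Type*} [CommSemiring R]
    [Fintype n] (P A : Matrix n n R) (y : n → R) :
    y ⬝ᵥ (P * A + Aᵀ * P) *ᵥ y = A *ᵥ y ⬝ᵥ P *ᵥ y + y ⬝ᵥ P *ᵥ (A *ᵥ y) := by
  rw [add_mulVec, dotProduct_add, ← mulVec_mulVec, ← mulVec_mulVec, dotProduct_mulVec y Aᵀ,
    vecMul_transpose, dotProduct_comm (A *ᵥ y)]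
  ring

theorem HasDerivAt.dotProduct_mulVec_self {𝕜 n : Type*} [NontriviallyNormedField 𝕜] [Fintype n]
    {x : 𝕜 → n → 𝕜} {t : 𝕜} (P A : Matrix n n 𝕜) (hx : HasDerivAt x (A *ᵥ x t) t) :
    HasDerivAt (fun s => x s ⬝ᵥ P *ᵥ x s) (x t ⬝ᵥ (P * A + Aᵀ * P) *ᵥ x t) t := by
  rw [dotProduct_mulVec_mul_add_transpose_mul]
  exact hx.dotProduct (hx.mulVec P)

theorem Matrix.IsHermitian.dotProduct_mulVec_le_iSup_eigenvalues {n : Type*} [Fintype n]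
    [DecidableEq n] {P : Matrix n n ℝ} (hP : P.IsHermitian) (x : n → ℝ) :
    x ⬝ᵥ P *ᵥ x ≤ (⨆ i, hP.eigenvalues i) * (x ⬝ᵥ x) := by
  open scoped MatrixOrder in
  have hle : P ≤ algebraMap ℝ (Matrix n n ℝ) (⨆ i, hP.eigenvalues i) := by
    refine le_algebraMap_of_spectrum_le (fun r hr => ?_) (ha := hP)
    rw [hP.spectrum_real_eq_range_eigenvalues] at hr
    obtain ⟨i, rfl⟩ := hr
    exact le_ciSup (Set.finite_range _).bddAbove i
  have := (le_iff.mp hle).dotProduct_mulVec_nonneg x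
  simpa [Algebra.algebraMap_eq_smul_one, sub_mulVec, smul_mulVec] using this

theorem le_exp_mul_mul_of_hasDerivAt_le_mul {f f' : ℝ → ℝ} {K t : ℝ}
    (hf : ∀ s, HasDerivAt f (f' s) s) (bound : ∀ s, f' s ≤ K * f s) (ht : 0 ≤ t) :
    f t ≤ Real.exp (K * t) * f 0 := by
  have := le_gronwallBound_of_liminf_deriv_right_le (a := 0) (b := t) (ε := 0)
    (fun s _ => (hf s).continuousAt.continuousWithinAt)
    (fun s _ _ hr => (hf s).hasDerivWithinAt.liminf_right_slope_le hr) le_rfl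
    (fun s _ => by simpa using bound s) t ⟨ht, le_rfl⟩
  rwa [gronwallBound_ε0, sub_zero, mul_comm] at this

theorem stmt0_general (n : ℕ) (P A : Matrix (Fin n) (Fin n) ℝ)
    (hP : P.PosDef) (ε : ℝ) (hε : 0 < ε)
    (hlyap : (-(ε • (1 : Matrix (Fin n) (Fin n) ℝ) + (P * A + Aᵀ * P))).PosSemidef) :
    ∀ v : Fin n → ℝ, v ≠ 0 → ∀ t : ℝ, 0 ≤ t →
      ((NormedSpace.exp (t • A)).mulVec v) ⬝ᵥ P.mulVec ((NormedSpace.exp (t • A)).mulVec v)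
        ≤ Real.exp (-(ε / (⨆ i, hP.1.eigenvalues i)) * t) * (v ⬝ᵥ P.mulVec v) := by
  intro v _ t ht
  set lmax := ⨆ i, hP.1.eigenvalues i
  have hlmax : 0 ≤ lmax := Real.iSup_nonneg fun i => (hP.eigenvalues_pos i).le
  have hdecay : ∀ y : Fin n → ℝ, y ⬝ᵥ (P * A + Aᵀ * P) *ᵥ y ≤ -ε * (y ⬝ᵥ y) := fun y => by
    have := hlyap.dotProduct_mulVec_nonneg y
    simp only [star_trivial, neg_mulVec, add_mulVec, smul_mulVec, one_mulVec, dotProduct_neg,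
      dotProduct_add, dotProduct_smul, smul_eq_mul] at this
    rw [add_mulVec, dotProduct_add]
    linarith
  have hV s := (hasDerivAt_exp_smul_mulVec A v s).dotProduct_mulVec_self P
  refine (le_exp_mul_mul_of_hasDerivAt_le_mul (K := -(ε / lmax)) hV (fun s => ?_) ht).trans_eq
    (by simp only [zero_smul, NormedSpace.exp_zero, one_mulVec])
  set y := NormedSpace.exp (s • A) *ᵥ v
  have hy := hP.1.dotProduct_mulVec_le_iSup_eigenvalues y
  -- `lmax = 0` happens only for `n = 0`, where `ε / 0 = 0`.
  have hrate : ε / lmax * lmax ≤ ε := by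
    rcases hlmax.eq_or_lt with h | h
    · simp [← h, hε.le]
    · rw [div_mul_cancel₀ _ h.ne']
  calc y ⬝ᵥ (P * A + Aᵀ * P) *ᵥ y ≤ -ε * (y ⬝ᵥ y) := hdecay y
    _ ≤ -(ε / lmax * lmax) * (y ⬝ᵥ y) := by gcongr; exact dotProduct_self_star_nonneg y
    _ ≤ -(ε / lmax) * (y ⬝ᵥ P *ᵥ y) := by
      rw [neg_mul, neg_mul, mul_assoc, neg_le_neg_iff]
      exact mul_le_mul_of_nonneg_left hy (div_nonneg hε.le hlmax)

/-- Exponential decay of the quadratic Lyapunov function `V(v) = vᵀ P v` along the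
linear flow `exp(tA)` under the Lyapunov inequality `P A + Aᵀ P ⪯ -ε I`. -/
theorem stmt0 (n : ℕ) (hn : 0 < n) (P A : Matrix (Fin n) (Fin n) ℝ)
    (hP : P.PosDef) (ε : ℝ) (hε : 0 < ε)
    (hlyap : (-(ε • (1 : Matrix (Fin n) (Fin n) ℝ) + (P * A + Aᵀ * P))).PosSemidef) :
    ∀ v : Fin n → ℝ, v ≠ 0 → ∀ t : ℝ, 0 ≤ t →
      ((NormedSpace.exp (t • A)).mulVec v) ⬝ᵥ P.mulVec ((NormedSpace.exp (t • A)).mulVec v)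
        ≤ Real.exp (-(ε / (⨆ i, hP.1.eigenvalues i)) * t) * (v ⬝ᵥ P.mulVec v) :=
  stmt0_general n P A hP ε hε hlyap
end

section
/- Let T : ℝ^{n_x} → ℝ^{n_z} be C¹ with ‖(∂T/∂x)(x)‖ ≤ L_T for all x in a convex set X, and let φ : ℝ^{n_z} × ℝ^{n_y} → ℝ^{n_z} be Lipschitz in its second argument with constant L_{φ,y}. Suppose T satisfies the intertwining PDE (∂T/∂x)(x)·f(x) = φ(T(x), h(x)) on X. If x(t) solves ẋ = f(x) + w(t) with x(t) ∈ X for all t, and y(t) = h(x(t)) + v(t), then z*(t) = T(x(t)) satisfies ż*(t) = φ(z*(t), y(t)) + Δ(t) with |Δ(t)| ≤ L_{φ,y}|v(t)| + L_T|w(t)|. -/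
/-!
By the chain rule and the intertwining equation, `d/dt T(x) = T'(x) (f x + w) = φ(T x, h x) + T'(x) w`.
Comparing with `φ(T x, y)` for the measured output `y = h x + v`, the mismatch splits into a difference
of `φ` in its output argument, controlled by the Lipschitz constant, and `T'(x) w`, controlled by the
operator-norm bound on `T'`.
-/

section LatentMismatch

variable {E Z Y : Type*} [NormedAddCommGroup E] [NormedSpace ℝ E]
  [NormedAddCommGroup Z] [NormedSpace ℝ Z] [NormedAddCommGroup Y]

/-- The paper's `Δ`, with `y₀ = h x` the true output, `v` the measurement noise and `w` the process
disturbance. -/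
def latentMismatch (φ : Z → Y → Z) (T' : E →L[ℝ] Z) (z : Z) (y₀ v : Y) (w : E) : Z :=
  φ z y₀ - φ z (y₀ + v) + T' w

theorem HasFDerivAt.hasDerivAt_comp_latentMismatch {T : E → Z} {T' : E →L[ℝ] Z} {x : ℝ → E}
    {t : ℝ} {u w : E} {φ : Z → Y → Z} {z : Z} {y₀ : Y} (v : Y)
    (hT : HasFDerivAt T T' (x t)) (hx : HasDerivAt x (u + w) t) (hPDE : T' u = φ z y₀) :
    HasDerivAt (fun s => T (x s)) (φ z (y₀ + v) + latentMismatch φ T' z y₀ v w) t := by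
  refine (hT.comp_hasDerivAt t hx).congr_deriv ?_
  rw [latentMismatch, map_add, hPDE]
  abel

theorem norm_latentMismatch_le {φ : Z → Y → Z} {T' : E →L[ℝ] Z} {z : Z} {L C : ℝ}
    (hφ : ∀ y₁ y₂, ‖φ z y₁ - φ z y₂‖ ≤ L * ‖y₁ - y₂‖) (hT' : ‖T'‖ ≤ C) (y₀ v : Y) (w : E) :
    ‖latentMismatch φ T' z y₀ v w‖ ≤ L * ‖v‖ + C * ‖w‖ := by
  have hφv : ‖φ z y₀ - φ z (y₀ + v)‖ ≤ L * ‖v‖ := by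
    simpa using hφ y₀ (y₀ + v)
  have hT'w : ‖T' w‖ ≤ C * ‖w‖ :=
    (T'.le_opNorm w).trans (mul_le_mul_of_nonneg_right hT' (norm_nonneg w))
  exact (norm_add_le _ _).trans (add_le_add hφv hT'w)

end LatentMismatch

theorem stmt13_general (nx nz ny : ℕ) (LT Lφy : ℝ)
    (f : EuclideanSpace ℝ (Fin nx) → EuclideanSpace ℝ (Fin nx))
    (h : EuclideanSpace ℝ (Fin nx) → EuclideanSpace ℝ (Fin ny))
    (T : EuclideanSpace ℝ (Fin nx) → EuclideanSpace ℝ (Fin nz))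
    (φ : EuclideanSpace ℝ (Fin nz) → EuclideanSpace ℝ (Fin ny) → EuclideanSpace ℝ (Fin nz))
    (X : Set (EuclideanSpace ℝ (Fin nx)))
    (hT : ContDiff ℝ 1 T)
    (hTbound : ∀ x ∈ X, ‖fderiv ℝ T x‖ ≤ LT)
    (hφLip : ∀ z y₁ y₂, ‖φ z y₁ - φ z y₂‖ ≤ Lφy * ‖y₁ - y₂‖)
    (hPDE : ∀ x ∈ X, fderiv ℝ T x (f x) = φ (T x) (h x))
    (x : ℝ → EuclideanSpace ℝ (Fin nx))
    (w : ℝ → EuclideanSpace ℝ (Fin nx)) (v : ℝ → EuclideanSpace ℝ (Fin ny))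
    (hx : ∀ t, HasDerivAt x (f (x t) + w t) t)
    (hxX : ∀ t, x t ∈ X) :
    ∀ t, ∃ Δ : EuclideanSpace ℝ (Fin nz),
      HasDerivAt (fun s => T (x s)) (φ (T (x t)) (h (x t) + v t) + Δ) t ∧
      ‖Δ‖ ≤ Lφy * ‖v t‖ + LT * ‖w t‖ := by
  intro t
  have hTx : HasFDerivAt T (fderiv ℝ T (x t)) (x t) :=
    (hT.differentiable one_ne_zero (x t)).hasFDerivAt
  exact ⟨latentMismatch φ (fderiv ℝ T (x t)) (T (x t)) (h (x t)) (v t) (w t),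
    hTx.hasDerivAt_comp_latentMismatch (v t) (hx t) (hPDE _ (hxX t)),
    norm_latentMismatch_le (hφLip _) (hTbound _ (hxX t)) _ _ _⟩

/-- The image of the perturbed true trajectory under the immersion `T` is an approximate
solution of the latent dynamics, with mismatch bounded by `L_{φ,y}|v(t)| + L_T|w(t)|`. -/
theorem stmt13 (nx nz ny : ℕ) (LT Lφy : ℝ)
    (f : EuclideanSpace ℝ (Fin nx) → EuclideanSpace ℝ (Fin nx))
    (h : EuclideanSpace ℝ (Fin nx) → EuclideanSpace ℝ (Fin ny))
    (T : EuclideanSpace ℝ (Fin nx) → EuclideanSpace ℝ (Fin nz))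
    (φ : EuclideanSpace ℝ (Fin nz) → EuclideanSpace ℝ (Fin ny) → EuclideanSpace ℝ (Fin nz))
    (X : Set (EuclideanSpace ℝ (Fin nx))) (hX : Convex ℝ X)
    (hT : ContDiff ℝ 1 T)
    (hTbound : ∀ x ∈ X, ‖fderiv ℝ T x‖ ≤ LT)
    (hφLip : ∀ z y₁ y₂, ‖φ z y₁ - φ z y₂‖ ≤ Lφy * ‖y₁ - y₂‖)
    (hPDE : ∀ x ∈ X, fderiv ℝ T x (f x) = φ (T x) (h x))
    (x : ℝ → EuclideanSpace ℝ (Fin nx))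
    (w : ℝ → EuclideanSpace ℝ (Fin nx)) (v : ℝ → EuclideanSpace ℝ (Fin ny))
    (hx : ∀ t, HasDerivAt x (f (x t) + w t) t)
    (hxX : ∀ t, x t ∈ X) :
    ∀ t, ∃ Δ : EuclideanSpace ℝ (Fin nz),
      HasDerivAt (fun s => T (x s)) (φ (T (x t)) (h (x t) + v t) + Δ) t ∧
      ‖Δ‖ ≤ Lφy * ‖v t‖ + LT * ‖w t‖ :=
  stmt13_general nx nz ny LT Lφy f h T φ X hT hTbound hφLip hPDE x w v hx hxX
end
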